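/- Let U be a nonempty bipartite graph on vertices a₁,a₂,b₁,b₂ and let (R,F) be a contributing labeled fancy U-ribbon of length 2ℓ with the label classes of {a_i^1,b_i^1}, {a_i^2,b_i^2}, and {c_i} disjoint. Then |{F(u) : u ∈ R}| ≤ 3ℓ + 2. If U is empty the bound is 4ℓ + 2. -/

import Mathlib

/-!
Each edge family of the fancy ribbon is the edge multiset of a closed walk: for `(x, y) ∈ U`
the ribbon edges form the cycle `Fa 0 x, Fb 0 y, Fa 1 x, Fb 1 y, …` of length `2ℓ`, and the
edges at the `c`-vertices through layer `x` form the cycle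
`Fa 0 x, Fc 0 0, Fb 0 x, Fc 0 1, Fa 1 x, …` of length `4ℓ`. A walk visits at most one vertex
more than it has distinct edges, and a multiset of edges of even multiplicities has at most half
as many distinct edges as elements. Colouring each label by its class gives every edge family a
fixed pair of colours, so the disjointness of the classes makes these families even separately.
Hence a `2ℓ`-cycle carries at most `ℓ + 1` labels and a `4ℓ`-cycle at most `2ℓ + 1`, and two
cycles cover all labels: the two spoke cycles if `U = ∅`; the ribbon cycle of `(x, x) ∈ U` and
the spoke cycle of the other layer; for `U = {(0, 1), (1, 0)}` the two ribbon cycles and the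
`c`-labels, which is combined with the bound `#labels + #cLabels ≤ 4ℓ + 2` from the spoke
cycles; for `U = {(x, y)}` with `x ≠ y` the ribbon cycle and the mixed spoke cycle through
`Fa · y, Fb · x`. The latter is even once the ribbon cycle is collapsed to a point, since that
collapse doubles every edge of the complementary mixed spoke cycle through `Fa · x, Fb · y`.
-/

def fancyRibbonEdges {α : Type*} (ℓ : ℕ) [NeZero ℓ]
    (U : Finset (Fin 2 × Fin 2)) (Fa Fb Fc : Fin ℓ → Fin 2 → α) :
    Multiset (Sym2 α) :=
  (∑ p ∈ (Finset.univ : Finset (Fin ℓ)) ×ˢ U,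
    ({s(Fa p.1 p.2.1, Fb p.1 p.2.2),
      s(Fa (p.1 + 1) p.2.1, Fb p.1 p.2.2)} : Multiset (Sym2 α)))
  + ∑ i : Fin ℓ,
    ({s(Fc i 0, Fa i 0), s(Fc i 0, Fa i 1),
      s(Fc i 0, Fb i 0), s(Fc i 0, Fb i 1),
      s(Fc i 1, Fa (i + 1) 0), s(Fc i 1, Fa (i + 1) 1),
      s(Fc i 1, Fb i 0), s(Fc i 1, Fb i 1)} :
        Multiset (Sym2 α))

open Finset

section EvenMultiset

variable {β : Type*} [DecidableEq β] {M N : Multiset β}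

theorem Multiset.two_mul_card_toFinset_le_card (hM : ∀ b, Even (M.count b)) :
    2 * #M.toFinset ≤ Multiset.card M := by
  rw [← Multiset.toFinset_sum_count_eq, mul_comm, ← smul_eq_mul]
  refine Finset.card_nsmul_le_sum _ _ _ fun b hb => ?_
  obtain ⟨k, hk⟩ := hM b
  have := Multiset.count_pos.2 (Multiset.mem_toFinset.1 hb)
  omega

theorem Multiset.even_count_left_of_disjoint (hMN : ∀ b, Even ((M + N).count b))
    (hdisj : Disjoint M N) (b : β) : Even (M.count b) := by
  by_cases hb : b ∈ M
  · simpa [Multiset.count_eq_zero.2 (Multiset.disjoint_left.1 hdisj hb)] using hMN b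
  · simp [Multiset.count_eq_zero.2 hb]

theorem Multiset.even_count_map {γ : Type*} [DecidableEq γ] (hM : ∀ b, Even (M.count b))
    (f : β → γ) (c : γ) : Even ((M.map f).count c) := by
  rw [Multiset.count_map, ← Multiset.toFinset_sum_count_eq]
  refine Finset.even_sum _ fun b _ => ?_
  rw [Multiset.count_filter]
  split_ifs
  exacts [hM b, Even.zero]

end EvenMultiset

section Walk

variable {α : Type*}

theorem List.IsChain.map_sym2 {β : Type*} {M : Multiset (Sym2 α)} {l : List α}
    (hl : l.IsChain fun u v => s(u, v) ∈ M) (q : α → β) :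
    (l.map q).IsChain fun u v => s(u, v) ∈ M.map (Sym2.map q) :=
  List.isChain_map q |>.2 <| hl.imp fun u v h => by
    simpa using Multiset.mem_map_of_mem (Sym2.map q) h

variable [DecidableEq α] {S : Finset (Sym2 α)}

theorem card_union_le_of_isChain_cons {W : Finset α} {x : α} {l : List α} (hx : x ∈ W)
    (hl : (x :: l).IsChain fun u v => s(u, v) ∈ S) :
    #(W ∪ (x :: l).toFinset) ≤ #W + #(S \ W.sym2) := by
  -- A vertex new to `W` is entered along an edge of `S` leaving `W`; that edge lies inside the
  -- enlarged `W`, so it is not counted again.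
  induction l generalizing x W with
  | nil => simp [hx]
  | cons y l ih =>
    rw [List.isChain_cons_cons] at hl
    have hW : W ∪ (x :: y :: l).toFinset = W ∪ (y :: l).toFinset := by
      rw [List.toFinset_cons (a := x), Finset.union_insert,
        Finset.insert_eq_of_mem (Finset.mem_union_left _ hx)]
    by_cases hy : y ∈ W
    · exact hW ▸ ih hy hl.2
    · have hsub : S \ (insert y W).sym2 ⊂ S \ W.sym2 := by
        refine Finset.ssubset_iff_of_subset
          (Finset.sdiff_subset_sdiff le_rfl (Finset.sym2_mono (Finset.subset_insert _ _)))
          |>.2 ⟨s(x, y), ?_, ?_⟩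
        · simp [hl.1, hy]
        · simp [hx]
      have := ih (Finset.mem_insert_self y W) hl.2
      rw [Finset.insert_union, Finset.insert_eq_of_mem (by simp), ← hW,
        Finset.card_insert_of_notMem hy] at this
      have := Finset.card_lt_card hsub
      omega

theorem card_union_le_of_isChain (W : Finset α) {l : List α}
    (hl : l.IsChain fun u v => s(u, v) ∈ S) :
    #(W ∪ l.toFinset) ≤ #W + #(S \ W.sym2) + 1 := by
  cases l with
  | nil => simp only [List.toFinset_nil, Finset.union_empty]; omega
  | cons x l =>
    have h := card_union_le_of_isChain_cons (Finset.mem_insert_self x W) hl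
    rw [Finset.insert_union, Finset.insert_eq_of_mem (by simp)] at h
    have := Finset.card_le_card
      (Finset.sdiff_subset_sdiff (le_refl S) (Finset.sym2_mono (Finset.subset_insert x W)))
    have := Finset.card_insert_le x W
    omega

theorem card_union_toFinset_le_of_isChain {l₁ l₂ : List α}
    (h₁ : l₁.IsChain fun u v => s(u, v) ∈ S) (h₂ : l₂.IsChain fun u v => s(u, v) ∈ S) :
    #(l₁.toFinset ∪ l₂.toFinset) ≤ #S + 2 := by
  have h₁' : l₁.IsChain fun u v => s(u, v) ∈ S ∩ l₁.toFinset.sym2 :=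
    h₁.imp_of_mem_imp fun u v hu hv huv => by simp [huv, hu, hv]
  have h₁'' := card_union_le_of_isChain ∅ h₁'
  simp only [Finset.empty_union, Finset.card_empty, Finset.sym2_empty, Finset.sdiff_empty] at h₁''
  have := card_union_le_of_isChain l₁.toFinset h₂
  have := Finset.card_sdiff_add_card_inter S l₁.toFinset.sym2
  omega

theorem two_mul_card_toFinset_le_of_isChain {M : Multiset (Sym2 α)}
    (hM : ∀ e, Even (M.count e)) {l : List α} (hl : l.IsChain fun u v => s(u, v) ∈ M) :
    2 * #l.toFinset ≤ Multiset.card M + 2 := by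
  have h := card_union_le_of_isChain ∅ (hl.imp fun _ _ h => Multiset.mem_toFinset.2 h)
  simp only [Finset.empty_union, Finset.card_empty, Finset.sym2_empty, Finset.sdiff_empty] at h
  have := Multiset.two_mul_card_toFinset_le_card hM
  omega

theorem two_mul_card_toFinset_union_le_of_isChain {M : Multiset (Sym2 α)}
    (hM : ∀ e, Even (M.count e)) {l₁ l₂ : List α}
    (h₁ : l₁.IsChain fun u v => s(u, v) ∈ M) (h₂ : l₂.IsChain fun u v => s(u, v) ∈ M) :
    2 * #(l₁.toFinset ∪ l₂.toFinset) ≤ Multiset.card M + 4 := by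
  have := card_union_toFinset_le_of_isChain (h₁.imp fun _ _ h => Multiset.mem_toFinset.2 h)
    (h₂.imp fun _ _ h => Multiset.mem_toFinset.2 h)
  have := Multiset.two_mul_card_toFinset_le_card hM
  omega

end Walk

theorem List.isChain_flatten_ofFn {α : Type*} {R : α → α → Prop} {n : ℕ}
    {b : Fin n → List α} (hne : ∀ i, b i ≠ []) (hb : ∀ i, (b i).IsChain R)
    (hlink : ∀ (i : ℕ) (hi : i + 1 < n), ∀ x ∈ (b ⟨i, by omega⟩).getLast?,
      ∀ y ∈ (b ⟨i + 1, hi⟩).head?, R x y) :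
    (List.ofFn b).flatten.IsChain R := by
  rw [List.isChain_flatten (by simpa [List.mem_ofFn] using fun i => (hne i).symm)]
  exact ⟨by simpa [List.mem_ofFn] using hb, List.isChain_ofFn.2 hlink⟩

section Cycle

variable {α : Type*} {ℓ : ℕ}

def cycleWalk₂ (f g : Fin ℓ → α) : List α :=
  (List.ofFn fun i => [f i, g i]).flatten

def cycleWalk₄ (a c b c' : Fin ℓ → α) : List α :=
  (List.ofFn fun i => [a i, c i, b i, c' i]).flatten

theorem mem_cycleWalk₂ (f g : Fin ℓ → α) {v : α} :
    v ∈ cycleWalk₂ f g ↔ ∃ i, v = f i ∨ v = g i := by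
  simp [cycleWalk₂, List.mem_flatten, List.mem_ofFn]

theorem mem_cycleWalk₄ (a c b c' : Fin ℓ → α) {v : α} :
    v ∈ cycleWalk₄ a c b c' ↔ ∃ i, v = a i ∨ v = c i ∨ v = b i ∨ v = c' i := by
  simp [cycleWalk₄, List.mem_flatten, List.mem_ofFn]

theorem left_mem_cycleWalk₂ (f g : Fin ℓ → α) (i : Fin ℓ) : f i ∈ cycleWalk₂ f g :=
  (mem_cycleWalk₂ f g).2 ⟨i, Or.inl rfl⟩

theorem right_mem_cycleWalk₂ (f g : Fin ℓ → α) (i : Fin ℓ) : g i ∈ cycleWalk₂ f g :=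
  (mem_cycleWalk₂ f g).2 ⟨i, Or.inr rfl⟩

variable [NeZero ℓ]

theorem Fin.mk_succ_eq_add_one {i : ℕ} (hi : i + 1 < ℓ) :
    (⟨i + 1, hi⟩ : Fin ℓ) = ⟨i, by omega⟩ + 1 := by
  ext
  simp [Fin.val_add, Nat.one_mod_eq_one.2 (by omega : ℓ ≠ 1), Nat.mod_eq_of_lt hi]

def cycleEdges₂ (f g : Fin ℓ → α) : Multiset (Sym2 α) :=
  ∑ i, {s(f i, g i), s(f (i + 1), g i)}

def cycleEdges₄ (a c b c' : Fin ℓ → α) : Multiset (Sym2 α) :=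
  ∑ i, {s(c i, a i), s(c i, b i), s(c' i, b i), s(c' i, a (i + 1))}

variable (f g a c b c' : Fin ℓ → α)

theorem card_cycleEdges₂ : Multiset.card (cycleEdges₂ f g) = 2 * ℓ := by
  simp [cycleEdges₂, Multiset.card_sum, mul_comm]

theorem card_cycleEdges₄ : Multiset.card (cycleEdges₄ a c b c') = 4 * ℓ := by
  simp [cycleEdges₄, Multiset.card_sum, mul_comm]

theorem mem_cycleEdges₂ {e : Sym2 α} :
    e ∈ cycleEdges₂ f g ↔ ∃ i, e = s(f i, g i) ∨ e = s(f (i + 1), g i) := by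
  simp [cycleEdges₂, Multiset.mem_sum]

theorem mem_cycleEdges₄ {e : Sym2 α} : e ∈ cycleEdges₄ a c b c' ↔
    ∃ i, e = s(c i, a i) ∨ e = s(c i, b i) ∨ e = s(c' i, b i) ∨ e = s(c' i, a (i + 1)) := by
  simp [cycleEdges₄, Multiset.mem_sum]

theorem isChain_cycleWalk₂ :
    (cycleWalk₂ f g).IsChain fun u v => s(u, v) ∈ cycleEdges₂ f g := by
  refine List.isChain_flatten_ofFn (by simp) (fun i => ?_) fun i hi => ?_
  · simpa using (mem_cycleEdges₂ f g).2 ⟨i, Or.inl rfl⟩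
  · simpa [Fin.mk_succ_eq_add_one hi, Sym2.eq_swap] using
      (mem_cycleEdges₂ f g).2 ⟨_, Or.inr rfl⟩

theorem isChain_cycleWalk₄ :
    (cycleWalk₄ a c b c').IsChain fun u v => s(u, v) ∈ cycleEdges₄ a c b c' := by
  refine List.isChain_flatten_ofFn (by simp) (fun i => ?_) fun i hi => ?_
  · simp only [List.isChain_cons_cons, List.IsChain.singleton, and_true]
    refine ⟨?_, ?_, ?_⟩ <;> rw [mem_cycleEdges₄]
    exacts [⟨i, Or.inl (Sym2.eq_swap)⟩, ⟨i, Or.inr (Or.inl rfl)⟩,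
      ⟨i, Or.inr (Or.inr (Or.inl (Sym2.eq_swap)))⟩]
  · simpa [Fin.mk_succ_eq_add_one hi] using
      (mem_cycleEdges₄ a c b c').2 ⟨_, Or.inr (Or.inr (Or.inr rfl))⟩

variable {f g a c b c'} {β : Type*}

theorem map_eq_of_mem_cycleEdges₂ {κ : α → β} {x y : β} (hf : ∀ i, κ (f i) = x)
    (hg : ∀ i, κ (g i) = y) {e : Sym2 α} (he : e ∈ cycleEdges₂ f g) :
    e.map κ = s(x, y) := by
  obtain ⟨i, rfl | rfl⟩ := (mem_cycleEdges₂ f g).1 he <;> simp [hf, hg]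

theorem map_eq_of_mem_cycleEdges₄ {κ : α → β} {x y : β} (ha : ∀ i, κ (a i) = x)
    (hb : ∀ i, κ (b i) = x) (hc : ∀ i, κ (c i) = y) (hc' : ∀ i, κ (c' i) = y) {e : Sym2 α}
    (he : e ∈ cycleEdges₄ a c b c') : e.map κ = s(y, x) := by
  obtain ⟨i, rfl | rfl | rfl | rfl⟩ := (mem_cycleEdges₄ a c b c').1 he <;>
    simp [ha, hb, hc, hc']

theorem even_count_map_cycleEdges₄ [DecidableEq β] {q : α → β} {p : β}
    (ha : ∀ i, q (a i) = p) (hb : ∀ i, q (b i) = p) (e : Sym2 β) :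
    Even (((cycleEdges₄ a c b c').map (Sym2.map q)).count e) := by
  rw [cycleEdges₄, ← Multiset.coe_mapAddMonoidHom, map_sum, Multiset.count_sum']
  refine Finset.even_sum _ fun i _ => ?_
  simp only [Multiset.coe_mapAddMonoidHom, Multiset.insert_eq_cons, Multiset.map_cons,
    Multiset.map_singleton, Sym2.map_mk, ha, hb, Multiset.count_cons, Multiset.count_singleton]
  split_ifs <;> decide

theorem cycleEdges₄_add_cycleEdges₄ [DecidableEq α] (a' b' : Fin ℓ → α) :
    cycleEdges₄ a c b c' + cycleEdges₄ a' c b' c' =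
      cycleEdges₄ a c b' c' + cycleEdges₄ a' c b c' := by
  simp only [cycleEdges₄, ← Finset.sum_add_distrib]
  refine Finset.sum_congr rfl fun i _ => Multiset.ext.2 fun e => ?_
  simp only [Multiset.insert_eq_cons, Multiset.count_add, Multiset.count_cons,
    Multiset.count_singleton]
  omega

end Cycle

theorem Fin.two_eq_or_eq_of_ne {x y : Fin 2} (hxy : x ≠ y) (z : Fin 2) : z = x ∨ z = y := by
  revert x y z; decide

theorem Finset.fin_two_prod_cases (U : Finset (Fin 2 × Fin 2)) (hU : U.Nonempty) :
    (∃ x, (x, x) ∈ U) ∨ U = {(0, 1), (1, 0)} ∨ ∃ x y, x ≠ y ∧ U = {(x, y)} := by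
  revert U; decide

section FancyRibbon

variable {α : Type*} {ℓ : ℕ} (Fa Fb Fc : Fin ℓ → Fin 2 → α)

def spokeWalk (x y : Fin 2) : List α :=
  cycleWalk₄ (Fa · x) (Fc · 0) (Fb · y) (Fc · 1)

theorem mem_spokeWalk_a {x : Fin 2} (y : Fin 2) (i : Fin ℓ) : Fa i x ∈ spokeWalk Fa Fb Fc x y :=
  (mem_cycleWalk₄ ..).2 ⟨i, Or.inl rfl⟩

theorem mem_spokeWalk_b (x : Fin 2) {y : Fin 2} (i : Fin ℓ) : Fb i y ∈ spokeWalk Fa Fb Fc x y :=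
  (mem_cycleWalk₄ ..).2 ⟨i, Or.inr (Or.inr (Or.inl rfl))⟩

theorem mem_spokeWalk_c (x y : Fin 2) (i : Fin ℓ) (z : Fin 2) :
    Fc i z ∈ spokeWalk Fa Fb Fc x y := by
  obtain rfl | rfl := Fin.two_eq_or_eq_of_ne zero_ne_one z
  exacts [(mem_cycleWalk₄ ..).2 ⟨i, Or.inr (Or.inl rfl)⟩,
    (mem_cycleWalk₄ ..).2 ⟨i, Or.inr (Or.inr (Or.inr rfl))⟩]

structure IsLayerColouring (κ : α → Option (Fin 2)) : Prop where
  apply_a : ∀ i x, κ (Fa i x) = some x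
  apply_b : ∀ i x, κ (Fb i x) = some x
  apply_c : ∀ i x, κ (Fc i x) = none

section Labels

variable [DecidableEq α]

def layer (x : Fin 2) : Finset α :=
  (univ.image fun i => Fa i x) ∪ (univ.image fun i => Fb i x)

def cLabels : Finset α :=
  univ.image fun p : Fin ℓ × Fin 2 => Fc p.1 p.2

def labels : Finset α :=
  (univ.image fun p : Fin ℓ × Fin 2 => Fa p.1 p.2) ∪
    (univ.image fun p : Fin ℓ × Fin 2 => Fb p.1 p.2) ∪ cLabels Fc

def layerColour (v : α) : Option (Fin 2) :=
  if v ∈ layer Fa Fb 0 then some 0 else if v ∈ layer Fa Fb 1 then some 1 else none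

theorem mem_cLabels (i : Fin ℓ) (x : Fin 2) : Fc i x ∈ cLabels Fc :=
  Finset.mem_image_of_mem _ (Finset.mem_univ (i, x))

theorem labels_subset {S : Finset α} (ha : ∀ i x, Fa i x ∈ S) (hb : ∀ i x, Fb i x ∈ S)
    (hc : ∀ i x, Fc i x ∈ S) : labels Fa Fb Fc ⊆ S := by
  simp only [labels, cLabels, Finset.union_subset_iff, Finset.image_subset_iff]
  exact ⟨⟨fun p _ => ha p.1 p.2, fun p _ => hb p.1 p.2⟩, fun p _ => hc p.1 p.2⟩

variable {Fa Fb Fc}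

theorem isLayerColouring_layerColour (h01 : Disjoint (layer Fa Fb 0) (layer Fa Fb 1))
    (h0c : Disjoint (layer Fa Fb 0) (cLabels Fc)) (h1c : Disjoint (layer Fa Fb 1) (cLabels Fc)) :
    IsLayerColouring Fa Fb Fc (layerColour Fa Fb) := by
  have colour {v : α} {x : Fin 2} (hv : v ∈ layer Fa Fb x) : layerColour Fa Fb v = some x := by
    obtain rfl | rfl := Fin.two_eq_or_eq_of_ne zero_ne_one x
    · simp [layerColour, hv]
    · simp [layerColour, hv, Finset.disjoint_right.1 h01 hv]
  refine ⟨fun i x => colour (Finset.mem_union_left _ (Finset.mem_image_of_mem _ (mem_univ i))),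
    fun i x => colour (Finset.mem_union_right _ (Finset.mem_image_of_mem _ (mem_univ i))),
    fun i x => ?_⟩
  simp [layerColour, Finset.disjoint_right.1 h0c (mem_cLabels Fc i x),
    Finset.disjoint_right.1 h1c (mem_cLabels Fc i x)]

end Labels

variable [NeZero ℓ]

def ribbonEdges (U : Finset (Fin 2 × Fin 2)) : Multiset (Sym2 α) :=
  ∑ z ∈ U, cycleEdges₂ (Fa · z.1) (Fb · z.2)

def spokeEdges (x y : Fin 2) : Multiset (Sym2 α) :=
  cycleEdges₄ (Fa · x) (Fc · 0) (Fb · y) (Fc · 1)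

theorem card_spokeEdges (x y : Fin 2) : Multiset.card (spokeEdges Fa Fb Fc x y) = 4 * ℓ :=
  card_cycleEdges₄ ..

theorem isChain_spokeWalk (x y : Fin 2) :
    (spokeWalk Fa Fb Fc x y).IsChain fun u v => s(u, v) ∈ spokeEdges Fa Fb Fc x y :=
  isChain_cycleWalk₄ ..

theorem fancyRibbonEdges_eq [DecidableEq α] (U : Finset (Fin 2 × Fin 2)) :
    fancyRibbonEdges ℓ U Fa Fb Fc =
      ribbonEdges Fa Fb U + (spokeEdges Fa Fb Fc 0 0 + spokeEdges Fa Fb Fc 1 1) := by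
  rw [fancyRibbonEdges, ribbonEdges, Finset.sum_product, Finset.sum_comm]
  congr 1
  simp only [spokeEdges, cycleEdges₄, ← Finset.sum_add_distrib]
  refine Finset.sum_congr rfl fun i _ => Multiset.ext.2 fun e => ?_
  simp only [Multiset.insert_eq_cons, Multiset.count_add, Multiset.count_cons,
    Multiset.count_singleton]
  omega

variable {Fa Fb Fc} {κ : α → Option (Fin 2)} {U : Finset (Fin 2 × Fin 2)}

theorem IsLayerColouring.map_eq_of_mem_ribbonEdges (hκ : IsLayerColouring Fa Fb Fc κ)
    {e : Sym2 α} (he : e ∈ ribbonEdges Fa Fb U) :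
    ∃ z ∈ U, e.map κ = s(some z.1, some z.2) := by
  obtain ⟨z, hz, he⟩ := Multiset.mem_sum.1 he
  exact ⟨z, hz, map_eq_of_mem_cycleEdges₂ (hκ.apply_a · _) (hκ.apply_b · _) he⟩

theorem IsLayerColouring.map_eq_of_mem_spokeEdges (hκ : IsLayerColouring Fa Fb Fc κ)
    {x : Fin 2} {e : Sym2 α} (he : e ∈ spokeEdges Fa Fb Fc x x) : e.map κ = s(none, some x) :=
  map_eq_of_mem_cycleEdges₄ (hκ.apply_a · _) (hκ.apply_b · _) (hκ.apply_c · _)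
    (hκ.apply_c · _) he

variable [DecidableEq α]

theorem even_count_ribbonEdges (hκ : IsLayerColouring Fa Fb Fc κ)
    (hT : ∀ e, Even ((fancyRibbonEdges ℓ U Fa Fb Fc).count e)) (e : Sym2 α) :
    Even ((ribbonEdges Fa Fb U).count e) := by
  rw [fancyRibbonEdges_eq] at hT
  refine Multiset.even_count_left_of_disjoint hT (Multiset.disjoint_left.2 fun he he' => ?_) e
  obtain ⟨z, -, hz⟩ := hκ.map_eq_of_mem_ribbonEdges he
  rcases Multiset.mem_add.1 he' with h | h <;> simp [hκ.map_eq_of_mem_spokeEdges h] at hz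

theorem even_count_spokeEdges (hκ : IsLayerColouring Fa Fb Fc κ)
    (hT : ∀ e, Even ((fancyRibbonEdges ℓ U Fa Fb Fc).count e)) (x : Fin 2) (e : Sym2 α) :
    Even ((spokeEdges Fa Fb Fc x x).count e) := by
  rw [fancyRibbonEdges_eq, add_comm] at hT
  have hS := Multiset.even_count_left_of_disjoint hT <| Multiset.disjoint_left.2 fun he he' => by
    obtain ⟨z, -, hz⟩ := hκ.map_eq_of_mem_ribbonEdges he'
    rcases Multiset.mem_add.1 he with h | h <;> simp [hκ.map_eq_of_mem_spokeEdges h] at hz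
  have hdisj : Disjoint (spokeEdges Fa Fb Fc 0 0) (spokeEdges Fa Fb Fc 1 1) :=
    Multiset.disjoint_left.2 fun he he' => by
      simpa [hκ.map_eq_of_mem_spokeEdges he'] using hκ.map_eq_of_mem_spokeEdges he
  obtain rfl | rfl := Fin.two_eq_or_eq_of_ne zero_ne_one x
  · exact Multiset.even_count_left_of_disjoint hS hdisj e
  · rw [add_comm] at hS
    exact Multiset.even_count_left_of_disjoint hS hdisj.symm e

theorem even_count_cycleEdges₂_of_mem (hκ : IsLayerColouring Fa Fb Fc κ)
    (hT : ∀ e, Even ((fancyRibbonEdges ℓ U Fa Fb Fc).count e)) {x : Fin 2} (hx : (x, x) ∈ U)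
    (e : Sym2 α) : Even ((cycleEdges₂ (Fa · x) (Fb · x)).count e) := by
  rw [fancyRibbonEdges_eq, ribbonEdges, ← Finset.add_sum_erase U _ hx, add_assoc] at hT
  refine Multiset.even_count_left_of_disjoint hT (Multiset.disjoint_left.2 fun he he' => ?_) e
  have hxx := map_eq_of_mem_cycleEdges₂ (hκ.apply_a · x) (hκ.apply_b · x) he
  rcases Multiset.mem_add.1 he' with h | h
  · obtain ⟨z, hz, hze⟩ := hκ.map_eq_of_mem_ribbonEdges (U := U.erase (x, x)) h
    refine (Finset.mem_erase.1 hz).1 (Prod.ext ?_ ?_) <;> simp_all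
  · rcases Multiset.mem_add.1 h with h | h <;> simp [hκ.map_eq_of_mem_spokeEdges h] at hxx

theorem card_labels_add_card_cLabels_le (hκ : IsLayerColouring Fa Fb Fc κ)
    (hT : ∀ e, Even ((fancyRibbonEdges ℓ U Fa Fb Fc).count e)) :
    #(labels Fa Fb Fc) + #(cLabels Fc) ≤ 4 * ℓ + 2 := by
  have hwalk (x : Fin 2) : 2 * #(spokeWalk Fa Fb Fc x x).toFinset ≤ 4 * ℓ + 2 := by
    simpa [card_spokeEdges] using
      two_mul_card_toFinset_le_of_isChain (even_count_spokeEdges hκ hT x) (isChain_spokeWalk ..)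
  have hlabels : labels Fa Fb Fc ⊆ (spokeWalk Fa Fb Fc 0 0).toFinset ∪
      (spokeWalk Fa Fb Fc 1 1).toFinset := by
    refine labels_subset _ _ _ (fun i x => ?_) (fun i x => ?_)
      fun i x => Finset.mem_union_left _ (List.mem_toFinset.2 (mem_spokeWalk_c ..))
    all_goals obtain rfl | rfl := Fin.two_eq_or_eq_of_ne zero_ne_one x <;>
      simp [mem_spokeWalk_a, mem_spokeWalk_b]
  have hc : cLabels Fc ⊆
      (spokeWalk Fa Fb Fc 0 0).toFinset ∩ (spokeWalk Fa Fb Fc 1 1).toFinset := by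
    simp only [cLabels, Finset.image_subset_iff, Finset.mem_inter, List.mem_toFinset]
    exact fun p _ => ⟨mem_spokeWalk_c .., mem_spokeWalk_c ..⟩
  have := Finset.card_union_add_card_inter (spokeWalk Fa Fb Fc 0 0).toFinset
    (spokeWalk Fa Fb Fc 1 1).toFinset
  have := Finset.card_le_card hlabels
  have := Finset.card_le_card hc
  have := hwalk 0
  have := hwalk 1
  omega

theorem card_labels_le_of_diag_mem (hκ : IsLayerColouring Fa Fb Fc κ)
    (hT : ∀ e, Even ((fancyRibbonEdges ℓ U Fa Fb Fc).count e)) {x : Fin 2} (hx : (x, x) ∈ U) :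
    #(labels Fa Fb Fc) ≤ 3 * ℓ + 2 := by
  obtain ⟨y, hyx⟩ := exists_ne x
  set R := (cycleWalk₂ (Fa · x) (Fb · x)).toFinset
  set S := (spokeWalk Fa Fb Fc y y).toFinset
  have hR : 2 * #R ≤ 2 * ℓ + 2 := by
    simpa [card_cycleEdges₂] using two_mul_card_toFinset_le_of_isChain
      (even_count_cycleEdges₂_of_mem hκ hT hx) (isChain_cycleWalk₂ ..)
  have hS : 2 * #S ≤ 4 * ℓ + 2 := by
    simpa [card_spokeEdges] using
      two_mul_card_toFinset_le_of_isChain (even_count_spokeEdges hκ hT y) (isChain_spokeWalk ..)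
  have hlabels : labels Fa Fb Fc ⊆ R ∪ S := by
    refine labels_subset _ _ _ (fun i z => ?_) (fun i z => ?_)
      fun i z => Finset.mem_union_right _ (List.mem_toFinset.2 (mem_spokeWalk_c ..))
    all_goals obtain rfl | rfl := Fin.two_eq_or_eq_of_ne hyx.symm z <;>
      simp [R, S, left_mem_cycleWalk₂, right_mem_cycleWalk₂, mem_spokeWalk_a, mem_spokeWalk_b]
  have := Finset.card_le_card hlabels
  have := Finset.card_union_le R S
  omega

theorem card_labels_le_of_eq_pair (hκ : IsLayerColouring Fa Fb Fc κ)
    (hT : ∀ e, Even ((fancyRibbonEdges ℓ U Fa Fb Fc).count e)) (hU : U = {(0, 1), (1, 0)}) :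
    #(labels Fa Fb Fc) ≤ 2 * ℓ + 2 + #(cLabels Fc) := by
  have hM : ribbonEdges Fa Fb U =
      cycleEdges₂ (Fa · 0) (Fb · 1) + cycleEdges₂ (Fa · 1) (Fb · 0) := by
    rw [hU, ribbonEdges, Finset.sum_pair (by decide)]
  set R₀ := (cycleWalk₂ (Fa · 0) (Fb · 1)).toFinset
  set R₁ := (cycleWalk₂ (Fa · 1) (Fb · 0)).toFinset
  have hR : 2 * #(R₀ ∪ R₁) ≤ 4 * ℓ + 4 := by
    have := two_mul_card_toFinset_union_le_of_isChain (even_count_ribbonEdges hκ hT)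
      ((isChain_cycleWalk₂ ..).imp fun _ _ h => hM ▸ Multiset.mem_add.2 (Or.inl h))
      ((isChain_cycleWalk₂ ..).imp fun _ _ h => hM ▸ Multiset.mem_add.2 (Or.inr h))
    rw [hM, Multiset.card_add, card_cycleEdges₂, card_cycleEdges₂] at this
    exact this.trans_eq (by ring)
  have hlabels : labels Fa Fb Fc ⊆ R₀ ∪ R₁ ∪ cLabels Fc := by
    refine labels_subset _ _ _ (fun i z => ?_) (fun i z => ?_)
      fun i z => Finset.mem_union_right _ (mem_cLabels Fc i z)
    all_goals obtain rfl | rfl := Fin.two_eq_or_eq_of_ne zero_ne_one z <;>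
      simp [R₀, R₁, left_mem_cycleWalk₂, right_mem_cycleWalk₂]
  have := Finset.card_le_card hlabels
  have := Finset.card_union_le (R₀ ∪ R₁) (cLabels Fc)
  omega

theorem even_count_map_spokeEdges (hκ : IsLayerColouring Fa Fb Fc κ)
    (hT : ∀ e, Even ((fancyRibbonEdges ℓ U Fa Fb Fc).count e)) {x y : Fin 2}
    {q : α → α} {p : α} (ha : ∀ i, q (Fa i x) = p) (hb : ∀ i, q (Fb i y) = p)
    (e : Sym2 α) :
    Even (((spokeEdges Fa Fb Fc y x).map (Sym2.map q)).count e) := by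
  have h := Multiset.even_count_map (M := spokeEdges Fa Fb Fc x x + spokeEdges Fa Fb Fc y y)
    (fun e => by
      rw [Multiset.count_add]
      exact (even_count_spokeEdges hκ hT x e).add (even_count_spokeEdges hκ hT y e))
    (Sym2.map q) e
  rw [spokeEdges, spokeEdges, cycleEdges₄_add_cycleEdges₄, Multiset.map_add,
    Multiset.count_add] at h
  exact (Nat.even_add.1 h).1 (even_count_map_cycleEdges₄ ha hb e)

theorem card_labels_le_of_eq_singleton (hκ : IsLayerColouring Fa Fb Fc κ)
    (hT : ∀ e, Even ((fancyRibbonEdges ℓ U Fa Fb Fc).count e)) {x y : Fin 2} (hxy : x ≠ y)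
    (hU : U = {(x, y)}) : #(labels Fa Fb Fc) ≤ 3 * ℓ + 2 := by
  set R := (cycleWalk₂ (Fa · x) (Fb · y)).toFinset
  let q : α → α := fun v => if v ∈ R then Fa 0 x else v
  have hR : 2 * #R ≤ 2 * ℓ + 2 := by
    have := even_count_ribbonEdges hκ hT
    rw [hU, ribbonEdges, Finset.sum_singleton] at this
    simpa [card_cycleEdges₂] using
      two_mul_card_toFinset_le_of_isChain this (isChain_cycleWalk₂ ..)
  have hqyx := even_count_map_spokeEdges hκ hT (q := q)
    (fun i => if_pos (List.mem_toFinset.2 (left_mem_cycleWalk₂ _ _ i)))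
    (fun i => if_pos (List.mem_toFinset.2 (right_mem_cycleWalk₂ _ _ i)))
  set W := ((spokeWalk Fa Fb Fc y x).map q).toFinset
  have hW : 2 * #W ≤ 4 * ℓ + 2 := by
    simpa [card_spokeEdges] using
      two_mul_card_toFinset_le_of_isChain hqyx ((isChain_spokeWalk ..).map_sym2 q)
  have hcover {v : α} (hv : v ∈ spokeWalk Fa Fb Fc y x) : v ∈ R ∪ W := by
    by_cases hvR : v ∈ R
    · exact Finset.mem_union_left _ hvR
    · refine Finset.mem_union_right _ (List.mem_toFinset.2 ?_)
      simpa [q, hvR] using List.mem_map_of_mem (f := q) hv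
  have hlabels : labels Fa Fb Fc ⊆ R ∪ W := by
    refine labels_subset _ _ _ (fun i z => ?_) (fun i z => ?_)
      fun i z => hcover (mem_spokeWalk_c ..)
    all_goals obtain rfl | rfl := Fin.two_eq_or_eq_of_ne hxy z
    · exact Finset.mem_union_left _ (List.mem_toFinset.2 (left_mem_cycleWalk₂ ..))
    · exact hcover (mem_spokeWalk_a ..)
    · exact hcover (mem_spokeWalk_b ..)
    · exact Finset.mem_union_left _ (List.mem_toFinset.2 (right_mem_cycleWalk₂ ..))
  have := Finset.card_le_card hlabels
  have := Finset.card_union_le R W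
  omega

end FancyRibbon

theorem fancy_ribbon_unique_label_bound_general {α : Type*} [DecidableEq α]
    (ℓ : ℕ) [NeZero ℓ] (U : Finset (Fin 2 × Fin 2))
    (Fa Fb Fc : Fin ℓ → Fin 2 → α)
    (hcontrib : ∀ e : Sym2 α,
      Even ((fancyRibbonEdges ℓ U Fa Fb Fc).count e))
    (hd12 : Disjoint
      ((Finset.univ.image fun i : Fin ℓ => Fa i 0) ∪
        (Finset.univ.image fun i : Fin ℓ => Fb i 0))
      ((Finset.univ.image fun i : Fin ℓ => Fa i 1) ∪
        (Finset.univ.image fun i : Fin ℓ => Fb i 1)))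
    (hd1c : Disjoint
      ((Finset.univ.image fun i : Fin ℓ => Fa i 0) ∪
        (Finset.univ.image fun i : Fin ℓ => Fb i 0))
      (Finset.univ.image fun p : Fin ℓ × Fin 2 => Fc p.1 p.2))
    (hd2c : Disjoint
      ((Finset.univ.image fun i : Fin ℓ => Fa i 1) ∪
        (Finset.univ.image fun i : Fin ℓ => Fb i 1))
      (Finset.univ.image fun p : Fin ℓ × Fin 2 => Fc p.1 p.2)) :
    (U.Nonempty →
      (((Finset.univ.image fun p : Fin ℓ × Fin 2 => Fa p.1 p.2) ∪
        (Finset.univ.image fun p : Fin ℓ × Fin 2 => Fb p.1 p.2) ∪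
        (Finset.univ.image fun p : Fin ℓ × Fin 2 => Fc p.1 p.2)).card ≤
          3 * ℓ + 2)) ∧
    (U = ∅ →
      (((Finset.univ.image fun p : Fin ℓ × Fin 2 => Fa p.1 p.2) ∪
        (Finset.univ.image fun p : Fin ℓ × Fin 2 => Fb p.1 p.2) ∪
        (Finset.univ.image fun p : Fin ℓ × Fin 2 => Fc p.1 p.2)).card ≤
          4 * ℓ + 2)) := by
  have hκ := isLayerColouring_layerColour hd12 hd1c hd2c
  have hC := card_labels_add_card_cLabels_le hκ hcontrib
  change (U.Nonempty → #(labels Fa Fb Fc) ≤ 3 * ℓ + 2) ∧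
    (U = ∅ → #(labels Fa Fb Fc) ≤ 4 * ℓ + 2)
  refine ⟨fun hU => ?_, fun _ => by omega⟩
  rcases U.fin_two_prod_cases hU with ⟨x, hx⟩ | hU | ⟨x, y, hxy, hU⟩
  · exact card_labels_le_of_diag_mem hκ hcontrib hx
  · have := card_labels_le_of_eq_pair hκ hcontrib hU
    omega
  · exact card_labels_le_of_eq_singleton hκ hcontrib hxy hU

/-- Lemma 4.22: a contributing labeled fancy `U`-ribbon of length `2ℓ`, with
the label classes of `{a_i^1,b_i^1}`, `{a_i^2,b_i^2}` and `{c_i}` disjoint,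
has at most `3ℓ + 2` distinct labels when `U` is nonempty, and at most
`4ℓ + 2` when `U` is empty. -/
theorem fancy_ribbon_unique_label_bound {α : Type*} [DecidableEq α]
    (ℓ : ℕ) [NeZero ℓ] (U : Finset (Fin 2 × Fin 2))
    (Fa Fb Fc : Fin ℓ → Fin 2 → α)
    (hlab : ∀ e ∈ fancyRibbonEdges ℓ U Fa Fb Fc, ¬ Sym2.IsDiag e)
    (hcontrib : ∀ e : Sym2 α,
      Even ((fancyRibbonEdges ℓ U Fa Fb Fc).count e))
    (hd12 : Disjoint
      ((Finset.univ.image fun i : Fin ℓ => Fa i 0) ∪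
        (Finset.univ.image fun i : Fin ℓ => Fb i 0))
      ((Finset.univ.image fun i : Fin ℓ => Fa i 1) ∪
        (Finset.univ.image fun i : Fin ℓ => Fb i 1)))
    (hd1c : Disjoint
      ((Finset.univ.image fun i : Fin ℓ => Fa i 0) ∪
        (Finset.univ.image fun i : Fin ℓ => Fb i 0))
      (Finset.univ.image fun p : Fin ℓ × Fin 2 => Fc p.1 p.2))
    (hd2c : Disjoint
      ((Finset.univ.image fun i : Fin ℓ => Fa i 1) ∪
        (Finset.univ.image fun i : Fin ℓ => Fb i 1))
      (Finset.univ.image fun p : Fin ℓ × Fin 2 => Fc p.1 p.2)) :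
    (U.Nonempty →
      (((Finset.univ.image fun p : Fin ℓ × Fin 2 => Fa p.1 p.2) ∪
        (Finset.univ.image fun p : Fin ℓ × Fin 2 => Fb p.1 p.2) ∪
        (Finset.univ.image fun p : Fin ℓ × Fin 2 => Fc p.1 p.2)).card ≤
          3 * ℓ + 2)) ∧
    (U = ∅ →
      (((Finset.univ.image fun p : Fin ℓ × Fin 2 => Fa p.1 p.2) ∪
        (Finset.univ.image fun p : Fin ℓ × Fin 2 => Fb p.1 p.2) ∪
        (Finset.univ.image fun p : Fin ℓ × Fin 2 => Fc p.1 p.2)).card ≤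
          4 * ℓ + 2)) :=
  fancy_ribbon_unique_label_bound_general ℓ U Fa Fb Fc hcontrib hd12 hd1c hd2c
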